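/- arXiv:2012.05601 — 2 statements merged into one kernel-verified Lean document; each statement's English description precedes it below -/
import Mathlib

section
/- For the rotated hyperbolic cocycle over the full 2-shift: λ_+(A_{(0,0)}, ν) = log((3+√5)/2), and there is ε_0 > 0 such that for every 0 < ε ≤ ε_0 and every θ ∈ [−ε,ε]² with θ ≠ (0,0), one has λ_+(A_θ, ν) < λ_+(A_{(0,0)}, ν). -/
/-!
For `B ∈ SL(2, ℝ)` with sum of squared entries `f`, the quantity `‖B‖²` is the larger root of
`r² - f r + 1`, so `f ≤ r + r⁻¹` forces `‖B‖² ≤ r` (strictly if `f < r + r⁻¹`). The eigenvalue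
`λ = (3 + √5) / 2` of `M` satisfies `λ + λ⁻¹ = 3`, hence `λ² + λ⁻² = 7` and `λ⁴ + λ⁻⁴ = 47`.
Since `M` has `f = 7`, `‖M‖ ≤ λ`; an eigenvector gives `‖Mⁿ‖ = λⁿ` and `λ_+(A_0) = log λ`.
For general `θ`, `‖A_θ^{(2)}(x)‖ ≤ ‖M R_t M‖` with `t` the angle of the second symbol, and
`M R_t M` has `f = 47 - 45 sin² t`; so `‖A_θ^{(2)}‖ ≤ λ²`, strictly on a cylinder where
`sin t ≠ 0`, which has positive measure as `ν` is fully supported. As `λ_+` is an infimum, `λ_+(A_θ) ≤ ½ ∫ log ‖A_θ^{(2)}‖ < log λ`. The limit defining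
`λ_+` exists by Fekete's lemma: shift invariance of `ν` makes `n ↦ ∫ log ‖A^{(n)}‖` subadditive.
-/

open MeasureTheory Filter Topology

attribute [local instance] Classical.propDecidable

noncomputable section

namespace PaperBGI

/-- The full one-sided shift space on `q` symbols. -/
abbrev FS (q : ℕ) := ℕ → Fin q

/-- The left shift map. -/
def shift {q : ℕ} (x : FS q) : FS q := fun n => x (n + 1)

/-- The `n`-cylinder of `x`. -/
def cyl {q : ℕ} (x : FS q) (n : ℕ) : Set (FS q) := {z | ∀ j < n, z j = x j}

/-- `d(x,z) = (1/2)^{min{ n : x_n ≠ z_n }}` (and `0` if `x = z`). -/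
def sdist {q : ℕ} (x z : FS q) : ℝ :=
  if h : ∃ n, x n ≠ z n then (1 / 2 : ℝ) ^ Nat.find h else 0

/-- Birkhoff sums along the shift. -/
def birk {q : ℕ} (f : FS q → ℝ) (n : ℕ) (x : FS q) : ℝ :=
  ∑ j ∈ Finset.range n, f (shift^[j] x)

/-- Prepending a symbol to a sequence. -/
def cons {q : ℕ} (i : Fin q) (x : FS q) : FS q := fun n =>
  match n with
  | 0 => i
  | m + 1 => x m

/-- The subshift of finite type with transition matrix `M`. -/
def sftSet {q : ℕ} (M : Fin q → Fin q → Bool) : Set (FS q) :=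
  {x | ∀ n, M (x n) (x (n + 1)) = true}

/-- Transitivity (irreducibility) of the transition matrix `M`. -/
def IsIrreducible {q : ℕ} (M : Fin q → Fin q → Bool) : Prop :=
  ∀ a c : Fin q, ∃ n, 0 < n ∧ ∃ p : ℕ → Fin q, p 0 = a ∧ p n = c ∧
    ∀ i < n, M (p i) (p (i + 1)) = true

/-- Lipschitz continuity with respect to `sdist`. -/
def LipSh {q : ℕ} (f : FS q → ℝ) : Prop :=
  ∃ L : ℝ, 0 ≤ L ∧ ∀ x z, |f x - f z| ≤ L * sdist x z

/-- Lipschitz-norm distance between two functions. -/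
def dLip {q : ℕ} (f g : FS q → ℝ) : ℝ :=
  (⨆ x : FS q, |f x - g x|) +
    ⨆ p : FS q × FS q,
      if p.1 = p.2 then 0 else |f p.1 - g p.1 - (f p.2 - g p.2)| / sdist p.1 p.2

/-- `J` is a (positive) normalized Jacobian on `Ω`. -/
def Normalized {q : ℕ} (Ω : Set (FS q)) (J : FS q → ℝ) : Prop :=
  (∀ x, 0 < J x) ∧ ∀ x ∈ Ω, (∑ i : Fin q, if cons i x ∈ Ω then J (cons i x) else 0) = 1

/-- The Gibbs property (at zero pressure) w.r.t. the normalized potential `log J`. -/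
def IsGibbs {q : ℕ} (Ω : Set (FS q)) (J : FS q → ℝ) (K : ℝ) (μ : Measure (FS q)) : Prop :=
  ∀ x ∈ Ω, ∀ n : ℕ, 1 ≤ n →
    K⁻¹ ≤ (μ (cyl x n)).toReal / Real.exp (birk (fun z => Real.log (J z)) n x) ∧
      (μ (cyl x n)).toReal / Real.exp (birk (fun z => Real.log (J z)) n x) ≤ K

/-- The parameter box `Θ = [a₁,b₁] × ⋯ × [a_k,b_k]`. -/
def box {k : ℕ} (a b : Fin k → ℝ) : Set (Fin k → ℝ) :=
  Set.univ.pi fun i => Set.Icc (a i) (b i)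

/-- Hypothesis A: `P₀` has a continuous strictly positive density on `Θ`. -/
def HypA {k : ℕ} (Θ : Set (Fin k → ℝ)) (P₀ : Measure (Fin k → ℝ)) : Prop :=
  IsProbabilityMeasure P₀ ∧
    ∃ ρ : (Fin k → ℝ) → ℝ, ContinuousOn ρ Θ ∧ (∀ θ ∈ Θ, 0 < ρ θ) ∧
      P₀ = (volume.restrict Θ).withDensity fun θ => ENNReal.ofReal (ρ θ)

/-- The setting of parameterized Gibbs direct observation. -/
structure Setting (q k : ℕ) where
  /-- transition matrix of the subshift of finite type -/
  M : Fin q → Fin q → Bool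
  irr : IsIrreducible M
  a : Fin k → ℝ
  b : Fin k → ℝ
  hab : ∀ i, a i ≤ b i
  /-- the parameterized family of Jacobians -/
  J : (Fin k → ℝ) → FS q → ℝ
  /-- the parameterized family of Gibbs measures -/
  μ : (Fin k → ℝ) → Measure (FS q)
  K : ℝ
  hK : 1 < K
  lip : ∀ θ ∈ box a b, LipSh fun x => Real.log (J θ x)
  norm : ∀ θ ∈ box a b, Normalized (sftSet M) (J θ)
  contJ : ∀ θ' ∈ box a b, ∀ ε > (0 : ℝ), ∃ δ > (0 : ℝ), ∀ θ ∈ box a b, dist θ θ' < δ →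
      dLip (fun x => Real.log (J θ x)) (fun x => Real.log (J θ' x)) < ε
  embJ : ∀ θ' ∈ box a b, ∀ ε > (0 : ℝ), ∃ δ > (0 : ℝ), ∀ θ ∈ box a b,
      dLip (fun x => Real.log (J θ x)) (fun x => Real.log (J θ' x)) < δ → dist θ θ' < ε
  injJ : Set.InjOn J (box a b)
  prob : ∀ θ ∈ box a b, IsProbabilityMeasure (μ θ)
  erg : ∀ θ ∈ box a b, Ergodic (shift (q := q)) (μ θ)
  supp : ∀ θ ∈ box a b, μ θ (sftSet M) = 1
  gibbs : ∀ θ ∈ box a b, IsGibbs (sftSet M) (J θ) K (μ θ)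
  uniq : ∀ θ ∈ box a b, ∀ ν : Measure (FS q), IsProbabilityMeasure ν → ν.map shift = ν →
      ν (sftSet M) = 1 → (∃ K' > (1 : ℝ), IsGibbs (sftSet M) (J θ) K' ν) → ν = μ θ
  measμ : ∀ (y : FS q) (n : ℕ), Measurable fun θ => μ θ (cyl y n)

/-- Relative entropy `h(μ_{θ₀} | μ_θ) = ∫ log (J_{θ₀}/J_θ) dμ_{θ₀}`. -/
def relEnt {q k : ℕ} (S : Setting q k) (θ₀ θ : Fin k → ℝ) : ℝ :=
  ∫ x, Real.log (S.J θ₀ x / S.J θ x) ∂(S.μ θ₀)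

/-- The `δ`-ball around `θ₀` inside `Θ`. -/
def pball {k : ℕ} (Θ : Set (Fin k → ℝ)) (θ₀ : Fin k → ℝ) (δ : ℝ) : Set (Fin k → ℝ) :=
  {θ ∈ Θ | dist θ θ₀ < δ}

end PaperBGI

namespace PaperBGI

/-- Operator norm of a `2×2` real matrix acting on Euclidean space. -/
def opNorm (A : Matrix (Fin 2) (Fin 2) ℝ) : ℝ :=
  ‖LinearMap.toContinuousLinearMap (Matrix.toEuclideanLin A)‖

/-- The hyperbolic matrix `M = [[2,1],[1,1]]`. -/
def hypMat : Matrix (Fin 2) (Fin 2) ℝ := !![2, 1; 1, 1]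

/-- The rotation matrix of angle `t`. -/
def rotMat (t : ℝ) : Matrix (Fin 2) (Fin 2) ℝ :=
  !![Real.cos t, -Real.sin t; Real.sin t, Real.cos t]

/-- The rotated cocycle: `A_θ(x) = M · R_{θ_{x₁}}` depends only on the first symbol. -/
def rotCocycle (θ : Fin 2 → ℝ) (x : FS 2) : Matrix (Fin 2) (Fin 2) ℝ :=
  hypMat * rotMat (θ (x 0))

/-- Products of a matrix cocycle: `A^{(n)}(x) = A(σ^{n−1}x) ⋯ A(σx) A(x)`. -/
def cocycleProd (A : FS 2 → Matrix (Fin 2) (Fin 2) ℝ) : ℕ → FS 2 → Matrix (Fin 2) (Fin 2) ℝ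
  | 0, _ => 1
  | n + 1, x => cocycleProd A n (shift x) * A x

/-- The top Lyapunov exponent `λ_+(A_θ, ν) = inf_{n ≥ 1} (1/n) ∫ log ‖A_θ^{(n)}‖ dν`. -/
def lyap (ν : Measure (FS 2)) (θ : Fin 2 → ℝ) : ℝ :=
  ⨅ n : ℕ, (1 / (n + 1 : ℝ)) *
    ∫ x, Real.log (opNorm (cocycleProd (rotCocycle θ) (n + 1) x)) ∂ν

open scoped Matrix Matrix.Norms.L2Operator

lemma quadForm_nonneg {p q b : ℝ} (hp : 0 ≤ p) (hq : 0 ≤ q) (hb : b ^ 2 ≤ p * q) (X Y : ℝ) :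
    0 ≤ p * X ^ 2 - 2 * b * X * Y + q * Y ^ 2 := by
  rcases (add_nonneg hp hq).eq_or_lt with h | h
  · have hp0 : p = 0 := by linarith
    have hq0 : q = 0 := by linarith
    have : b = 0 := by subst hp0; nlinarith [sq_nonneg b]
    simp [hp0, hq0, this]
  · -- `(p + q) (p X² - 2 b X Y + q Y²) ≥ (p X - b Y)² + (b X - q Y)²` since `b² ≤ p q`
    refine nonneg_of_mul_nonneg_right ?_ h
    nlinarith [sq_nonneg (p * X - b * Y), sq_nonneg (b * X - q * Y), sq_nonneg X, sq_nonneg Y,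
      mul_nonneg (sub_nonneg.2 hb) (sq_nonneg X), mul_nonneg (sub_nonneg.2 hb) (sq_nonneg Y)]

/-- The factor on the right is the top eigenvalue of the symmetric matrix `[[a, b], [b, c]]`. -/
lemma quadForm_le (a b c X Y : ℝ) :
    a * X ^ 2 + 2 * b * X * Y + c * Y ^ 2
      ≤ (a + c + √((a - c) ^ 2 + 4 * b ^ 2)) / 2 * (X ^ 2 + Y ^ 2) := by
  set s := √((a - c) ^ 2 + 4 * b ^ 2)
  have hs : s ^ 2 = (a - c) ^ 2 + 4 * b ^ 2 := Real.sq_sqrt (by positivity)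
  have hac : |a - c| ≤ s := Real.abs_le_sqrt (by nlinarith [sq_nonneg b])
  have := quadForm_nonneg (p := (s - (a - c)) / 2) (q := (s + (a - c)) / 2) (b := b)
    (by linarith [le_abs_self (a - c)]) (by linarith [neg_abs_le (a - c)]) (by nlinarith) X Y
  linarith

lemma opNorm_eq_norm (A : Matrix (Fin 2) (Fin 2) ℝ) : opNorm A = ‖A‖ := rfl

def sqFrobenius (B : Matrix (Fin 2) (Fin 2) ℝ) : ℝ := B 0 0 ^ 2 + B 0 1 ^ 2 + B 1 0 ^ 2 + B 1 1 ^ 2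

lemma sq_norm_euclidean_fin_two (v : EuclideanSpace ℝ (Fin 2)) : ‖v‖ ^ 2 = v 0 ^ 2 + v 1 ^ 2 := by
  rw [EuclideanSpace.norm_eq, Real.sq_sqrt (by positivity)]
  simp [Fin.sum_univ_two]

lemma toEuclideanCLM_apply_fin_two (B : Matrix (Fin 2) (Fin 2) ℝ) (v : EuclideanSpace ℝ (Fin 2))
    (i : Fin 2) : Matrix.toEuclideanCLM (𝕜 := ℝ) B v i = B i 0 * v 0 + B i 1 * v 1 := by
  simp [Matrix.mulVec, dotProduct, Fin.sum_univ_two]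

lemma sq_norm_fin_two_le (B : Matrix (Fin 2) (Fin 2) ℝ) :
    ‖B‖ ^ 2 ≤ (sqFrobenius B + √(sqFrobenius B ^ 2 - 4 * B.det ^ 2)) / 2 := by
  set R := (sqFrobenius B + √(sqFrobenius B ^ 2 - 4 * B.det ^ 2)) / 2
  have hR : 0 ≤ R := by unfold R sqFrobenius; positivity
  suffices ‖B‖ ≤ √R by
    calc ‖B‖ ^ 2 ≤ √R ^ 2 := pow_le_pow_left₀ (norm_nonneg B) this 2
      _ = R := Real.sq_sqrt hR
  refine (Matrix.toEuclideanCLM (𝕜 := ℝ) B).opNorm_le_bound (Real.sqrt_nonneg R) fun v ↦ ?_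
  rw [← Real.sqrt_sq (norm_nonneg _), ← Real.sqrt_sq (norm_nonneg v), ← Real.sqrt_mul hR]
  gcongr
  rw [sq_norm_euclidean_fin_two, sq_norm_euclidean_fin_two, toEuclideanCLM_apply_fin_two,
    toEuclideanCLM_apply_fin_two]
  have hdisc : sqFrobenius B ^ 2 - 4 * B.det ^ 2
      = (B 0 0 ^ 2 + B 1 0 ^ 2 - (B 0 1 ^ 2 + B 1 1 ^ 2)) ^ 2
        + 4 * (B 0 0 * B 0 1 + B 1 0 * B 1 1) ^ 2 := by
    rw [Matrix.det_fin_two, sqFrobenius]; ring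
  have := quadForm_le (B 0 0 ^ 2 + B 1 0 ^ 2) (B 0 0 * B 0 1 + B 1 0 * B 1 1)
    (B 0 1 ^ 2 + B 1 1 ^ 2) (v 0) (v 1)
  rw [← hdisc] at this
  unfold R
  unfold sqFrobenius at this ⊢
  linear_combination this

lemma sq_norm_le_of_sqFrobenius_le {B : Matrix (Fin 2) (Fin 2) ℝ} (hdet : B.det = 1) {r : ℝ}
    (hr : 1 ≤ r) (hf : sqFrobenius B ≤ r + r⁻¹) : ‖B‖ ^ 2 ≤ r := by
  have hr' : r⁻¹ ≤ r := (inv_le_one_of_one_le₀ hr).trans hr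
  have hf' : sqFrobenius B * r ≤ r ^ 2 + 1 := by
    have := mul_le_mul_of_nonneg_right hf (by positivity : 0 ≤ r)
    rwa [add_mul, inv_mul_cancel₀ (by positivity), ← sq] at this
  have hsqrt : √(sqFrobenius B ^ 2 - 4) ≤ 2 * r - sqFrobenius B :=
    Real.sqrt_le_iff.2 ⟨by linarith, by nlinarith⟩
  have := sq_norm_fin_two_le B
  rw [hdet, one_pow, mul_one] at this
  linarith

lemma sq_norm_lt_of_sqFrobenius_lt {B : Matrix (Fin 2) (Fin 2) ℝ} (hdet : B.det = 1) {r : ℝ}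
    (hr : 1 ≤ r) (hf : sqFrobenius B < r + r⁻¹) : ‖B‖ ^ 2 < r := by
  have hr' : r⁻¹ ≤ r := (inv_le_one_of_one_le₀ hr).trans hr
  have hf' : sqFrobenius B * r < r ^ 2 + 1 := by
    have := mul_lt_mul_of_pos_right hf (by positivity : 0 < r)
    rwa [add_mul, inv_mul_cancel₀ (by positivity), ← sq] at this
  have hsqrt : √(sqFrobenius B ^ 2 - 4) < 2 * r - sqFrobenius B :=
    (Real.sqrt_lt' (by linarith)).2 (by nlinarith)
  have := sq_norm_fin_two_le B
  rw [hdet, one_pow, mul_one] at this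
  linarith

lemma sqFrobenius_le_two_mul_sq_norm (B : Matrix (Fin 2) (Fin 2) ℝ) :
    sqFrobenius B ≤ 2 * ‖B‖ ^ 2 := by
  have column (j : Fin 2) : B 0 j ^ 2 + B 1 j ^ 2 ≤ ‖B‖ ^ 2 := by
    have := (Matrix.toEuclideanCLM (𝕜 := ℝ) B).le_opNorm (EuclideanSpace.single j 1)
    rw [Matrix.l2_opNorm_toEuclideanCLM, PiLp.norm_single, norm_one, mul_one] at this
    have := pow_le_pow_left₀ (norm_nonneg _) this 2
    rw [sq_norm_euclidean_fin_two, toEuclideanCLM_apply_fin_two,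
      toEuclideanCLM_apply_fin_two] at this
    fin_cases j <;> simpa using this
  unfold sqFrobenius
  linarith [column 0, column 1]

lemma one_le_norm_of_det_eq_one {B : Matrix (Fin 2) (Fin 2) ℝ} (hdet : B.det = 1) : 1 ≤ ‖B‖ := by
  rw [Matrix.det_fin_two] at hdet
  have : 2 ≤ sqFrobenius B := by
    unfold sqFrobenius; nlinarith [sq_nonneg (B 0 0 - B 1 1), sq_nonneg (B 0 1 + B 1 0)]
  have := sqFrobenius_le_two_mul_sq_norm B
  nlinarith [norm_nonneg B]

lemma norm_le_l2_opNorm_of_mulVec_eq_smul {𝕜 n : Type*} [RCLike 𝕜] [Fintype n] [DecidableEq n]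
    {A : Matrix n n 𝕜} {v : n → 𝕜} (hv : v ≠ 0) {c : 𝕜} (h : A *ᵥ v = c • v) : ‖c‖ ≤ ‖A‖ := by
  have := (Matrix.toEuclideanCLM (𝕜 := 𝕜) A).le_opNorm (WithLp.toLp 2 v)
  rw [Matrix.toEuclideanCLM_toLp, h, WithLp.toLp_smul, norm_smul] at this
  exact le_of_mul_le_mul_right this (by simpa using hv)

lemma sq_add_inv_sq {x : ℝ} (hx : x ≠ 0) : x ^ 2 + (x ^ 2)⁻¹ = (x + x⁻¹) ^ 2 - 2 := by
  field_simp
  ring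

def hypEigenval : ℝ := (3 + √5) / 2

local notation "λ₊" => hypEigenval

lemma hypEigenval_sq : λ₊ ^ 2 = 3 * λ₊ - 1 := by
  unfold hypEigenval
  linear_combination (1 / 4 : ℝ) * Real.sq_sqrt (show (0 : ℝ) ≤ 5 by norm_num)

lemma one_lt_hypEigenval : 1 < λ₊ := by
  unfold hypEigenval
  linarith [Real.sqrt_nonneg 5]

lemma hypEigenval_pos : 0 < λ₊ := zero_lt_one.trans one_lt_hypEigenval

lemma hypEigenval_add_inv : λ₊ + λ₊⁻¹ = 3 := by
  have := hypEigenval_pos.ne'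
  field_simp
  linear_combination hypEigenval_sq

lemma hypEigenval_sq_add_inv : λ₊ ^ 2 + (λ₊ ^ 2)⁻¹ = 7 := by
  rw [sq_add_inv_sq hypEigenval_pos.ne', hypEigenval_add_inv]
  norm_num

lemma hypEigenval_pow_four_add_inv : λ₊ ^ 4 + (λ₊ ^ 4)⁻¹ = 47 := by
  rw [show λ₊ ^ 4 = (λ₊ ^ 2) ^ 2 by ring, sq_add_inv_sq (pow_pos hypEigenval_pos 2).ne',
    hypEigenval_sq_add_inv]
  norm_num

lemma hypMat_mulVec_eigenvector : hypMat *ᵥ ![λ₊ - 1, 1] = λ₊ • ![λ₊ - 1, 1] := by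
  ext i
  fin_cases i
  · simp [hypMat, Matrix.mulVec, dotProduct, Fin.sum_univ_two]
    linear_combination -hypEigenval_sq
  · simp [hypMat, Matrix.mulVec, dotProduct, Fin.sum_univ_two]

lemma det_hypMat : hypMat.det = 1 := by
  rw [hypMat, Matrix.det_fin_two_of]; norm_num

lemma norm_hypMat_le : ‖hypMat‖ ≤ λ₊ := by
  have h := sq_norm_le_of_sqFrobenius_le det_hypMat (one_le_pow₀ one_lt_hypEigenval.le) (by
    rw [hypEigenval_sq_add_inv]; norm_num [sqFrobenius, hypMat])
  exact (pow_le_pow_iff_left₀ (norm_nonneg _) hypEigenval_pos.le two_ne_zero).1 h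

lemma norm_hypMat_pow (n : ℕ) : ‖hypMat ^ n‖ = λ₊ ^ n := by
  refine le_antisymm
    ((norm_pow_le _ n).trans (pow_le_pow_left₀ (norm_nonneg _) norm_hypMat_le n)) ?_
  have hv : ![λ₊ - 1, 1] ≠ 0 := fun h ↦ by simpa using congrFun h 1
  have heig : hypMat ^ n *ᵥ ![λ₊ - 1, 1] = λ₊ ^ n • ![λ₊ - 1, 1] := by
    induction n with
    | zero => simp
    | succ n ih =>
      rw [pow_succ, ← Matrix.mulVec_mulVec, hypMat_mulVec_eigenvector, Matrix.mulVec_smul, ih,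
        smul_smul, pow_succ']
  simpa [abs_of_pos hypEigenval_pos] using
    norm_le_l2_opNorm_of_mulVec_eq_smul hv heig

lemma det_rotMat (t : ℝ) : (rotMat t).det = 1 := by
  rw [rotMat, Matrix.det_fin_two_of]
  linear_combination Real.cos_sq_add_sin_sq t

lemma norm_rotMat_le (t : ℝ) : ‖rotMat t‖ ≤ 1 := by
  have h := sq_norm_le_of_sqFrobenius_le (det_rotMat t) le_rfl (by
    simp only [sqFrobenius, rotMat, Matrix.of_apply, Matrix.cons_val', Matrix.cons_val_zero,
      Matrix.cons_val_one, Matrix.empty_val', Matrix.cons_val_fin_one]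
    nlinarith [Real.cos_sq_add_sin_sq t])
  nlinarith [norm_nonneg (rotMat t)]

lemma rotMat_zero : rotMat 0 = 1 := by
  rw [rotMat, Real.cos_zero, Real.sin_zero, neg_zero, Matrix.one_fin_two]

lemma det_hypMat_mul_rotMat_mul_hypMat (t : ℝ) : (hypMat * rotMat t * hypMat).det = 1 := by
  simp [Matrix.det_mul, det_hypMat, det_rotMat]

lemma sqFrobenius_hypMat_mul_rotMat_mul_hypMat (t : ℝ) :
    sqFrobenius (hypMat * rotMat t * hypMat) = 47 - 45 * Real.sin t ^ 2 := by
  simp only [sqFrobenius, hypMat, rotMat, Matrix.mul_fin_two, Matrix.of_apply, Matrix.cons_val',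
    Matrix.cons_val_zero, Matrix.cons_val_one, Matrix.empty_val', Matrix.cons_val_fin_one]
  linear_combination 47 * Real.cos_sq_add_sin_sq t

lemma norm_hypMat_mul_rotMat_mul_hypMat_le (t : ℝ) : ‖hypMat * rotMat t * hypMat‖ ≤ λ₊ ^ 2 := by
  have h := sq_norm_le_of_sqFrobenius_le (det_hypMat_mul_rotMat_mul_hypMat t)
    (one_le_pow₀ one_lt_hypEigenval.le) (r := λ₊ ^ 4) (by
      rw [hypEigenval_pow_four_add_inv, sqFrobenius_hypMat_mul_rotMat_mul_hypMat]
      nlinarith [sq_nonneg (Real.sin t)])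
  rw [show λ₊ ^ 4 = (λ₊ ^ 2) ^ 2 by ring] at h
  exact (pow_le_pow_iff_left₀ (norm_nonneg _) (by positivity) two_ne_zero).1 h

lemma norm_hypMat_mul_rotMat_mul_hypMat_lt {t : ℝ} (ht : Real.sin t ≠ 0) :
    ‖hypMat * rotMat t * hypMat‖ < λ₊ ^ 2 := by
  have h := sq_norm_lt_of_sqFrobenius_lt (det_hypMat_mul_rotMat_mul_hypMat t)
    (one_le_pow₀ one_lt_hypEigenval.le) (r := λ₊ ^ 4) (by
      rw [hypEigenval_pow_four_add_inv, sqFrobenius_hypMat_mul_rotMat_mul_hypMat]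
      nlinarith [sq_pos_of_ne_zero ht])
  rw [show λ₊ ^ 4 = (λ₊ ^ 2) ^ 2 by ring] at h
  exact (pow_lt_pow_iff_left₀ (norm_nonneg _) (by positivity) two_ne_zero).1 h

lemma continuous_shift {q : ℕ} : Continuous (shift (q := q)) :=
  continuous_pi fun n ↦ continuous_apply (n + 1)

section Cocycle

variable {A : FS 2 → Matrix (Fin 2) (Fin 2) ℝ}

lemma cocycleProd_add (m n : ℕ) (x : FS 2) :
    cocycleProd A (m + n) x = cocycleProd A m (shift^[n] x) * cocycleProd A n x := by
  induction n generalizing x with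
  | zero => simp [cocycleProd]
  | succ n ih =>
    rw [← add_assoc, cocycleProd, ih, cocycleProd, Function.iterate_succ_apply, mul_assoc]

lemma det_cocycleProd (hdet : ∀ x, (A x).det = 1) (n : ℕ) (x : FS 2) :
    (cocycleProd A n x).det = 1 := by
  induction n generalizing x with
  | zero => simp [cocycleProd]
  | succ n ih => rw [cocycleProd, Matrix.det_mul, ih, hdet, one_mul]

lemma continuous_cocycleProd (hA : Continuous A) (n : ℕ) : Continuous (cocycleProd A n) := by
  induction n with
  | zero => exact continuous_const
  | succ n ih => exact (ih.comp continuous_shift).mul hA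

lemma norm_cocycleProd_pos (hdet : ∀ x, (A x).det = 1) (n : ℕ) (x : FS 2) :
    0 < ‖cocycleProd A n x‖ :=
  zero_lt_one.trans_le (one_le_norm_of_det_eq_one (det_cocycleProd hdet n x))

lemma log_norm_cocycleProd_nonneg (hdet : ∀ x, (A x).det = 1) (n : ℕ) (x : FS 2) :
    0 ≤ Real.log ‖cocycleProd A n x‖ :=
  Real.log_nonneg (one_le_norm_of_det_eq_one (det_cocycleProd hdet n x))

lemma continuous_log_norm_cocycleProd (hA : Continuous A) (hdet : ∀ x, (A x).det = 1) (n : ℕ) :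
    Continuous fun x ↦ Real.log ‖cocycleProd A n x‖ :=
  (continuous_cocycleProd hA n).norm.log fun x ↦ (norm_cocycleProd_pos hdet n x).ne'

def logNormIntegral (ν : Measure (FS 2)) (A : FS 2 → Matrix (Fin 2) (Fin 2) ℝ) (n : ℕ) : ℝ :=
  ∫ x, Real.log ‖cocycleProd A n x‖ ∂ν

variable {ν : Measure (FS 2)}

lemma logNormIntegral_nonneg (hdet : ∀ x, (A x).det = 1) (n : ℕ) : 0 ≤ logNormIntegral ν A n :=
  integral_nonneg (log_norm_cocycleProd_nonneg hdet n)

variable [IsFiniteMeasure ν]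

lemma integrable_log_norm_cocycleProd (hA : Continuous A) (hdet : ∀ x, (A x).det = 1) (n : ℕ) :
    Integrable (fun x ↦ Real.log ‖cocycleProd A n x‖) ν :=
  (continuous_log_norm_cocycleProd hA hdet n).integrable_of_hasCompactSupport
    (HasCompactSupport.of_compactSpace _)

lemma subadditive_logNormIntegral (hν : MeasurePreserving shift ν ν) (hA : Continuous A)
    (hdet : ∀ x, (A x).det = 1) : Subadditive (logNormIntegral ν A) := by
  intro m n
  have hpos := norm_cocycleProd_pos hdet
  have hle (x : FS 2) : Real.log ‖cocycleProd A (m + n) x‖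
      ≤ Real.log ‖cocycleProd A m (shift^[n] x)‖ + Real.log ‖cocycleProd A n x‖ := by
    rw [← Real.log_mul (hpos m _).ne' (hpos n x).ne', cocycleProd_add]
    exact Real.log_le_log (hpos _ x |>.trans_eq (by rw [cocycleProd_add])) (norm_mul_le _ _)
  have hshift : ∫ x, Real.log ‖cocycleProd A m (shift^[n] x)‖ ∂ν = logNormIntegral ν A m := by
    rw [← integral_map (hν.iterate n).measurable.aemeasurable
      (continuous_log_norm_cocycleProd hA hdet m).aestronglyMeasurable, (hν.iterate n).map_eq,
      logNormIntegral]
  have hint := integrable_log_norm_cocycleProd (ν := ν) hA hdet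
  have hint_shift : Integrable (fun x ↦ Real.log ‖cocycleProd A m (shift^[n] x)‖) ν :=
    (hν.iterate n).integrable_comp_of_integrable (hint m)
  calc logNormIntegral ν A (m + n)
      ≤ ∫ x, (Real.log ‖cocycleProd A m (shift^[n] x)‖ + Real.log ‖cocycleProd A n x‖) ∂ν :=
        integral_mono (hint _) (hint_shift.add (hint n)) hle
    _ = logNormIntegral ν A m + logNormIntegral ν A n := by
        rw [integral_add hint_shift (hint n), hshift]; rfl

lemma tendsto_logNormIntegral_div (hν : MeasurePreserving shift ν ν) (hA : Continuous A)
    (hdet : ∀ x, (A x).det = 1) :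
    Tendsto (fun n : ℕ ↦ logNormIntegral ν A n / n) atTop
      (𝓝 (⨅ n : ℕ, logNormIntegral ν A (n + 1) / (n + 1))) := by
  have hsub := subadditive_logNormIntegral hν hA hdet
  have hbdd : BddBelow (Set.range fun n : ℕ ↦ logNormIntegral ν A n / n) :=
    ⟨0, by rintro _ ⟨n, rfl⟩; exact div_nonneg (logNormIntegral_nonneg hdet n) n.cast_nonneg⟩
  have htends := hsub.tendsto_lim hbdd
  suffices hlim : hsub.lim = ⨅ n : ℕ, logNormIntegral ν A (n + 1) / (n + 1) from hlim ▸ htends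
  have hterm (n : ℕ) : hsub.lim ≤ logNormIntegral ν A (n + 1) / (n + 1) := by
    exact_mod_cast hsub.lim_le_div hbdd n.succ_ne_zero
  have htends' : Tendsto (fun n : ℕ ↦ logNormIntegral ν A (n + 1) / (n + 1)) atTop
      (𝓝 hsub.lim) := by
    exact_mod_cast (tendsto_add_atTop_iff_nat 1).2 htends
  refine le_antisymm (le_ciInf hterm) (ge_of_tendsto' htends' fun n ↦ ciInf_le ?_ n)
  exact ⟨hsub.lim, by rintro _ ⟨n, rfl⟩; exact hterm n⟩

end Cocycle

section RotatedCocycle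

variable (θ : Fin 2 → ℝ)

lemma continuous_rotCocycle : Continuous (rotCocycle θ) :=
  (continuous_of_discreteTopology (f := fun i : Fin 2 ↦ hypMat * rotMat (θ i))).comp
    (continuous_apply 0)

lemma det_rotCocycle (x : FS 2) : (rotCocycle θ x).det = 1 := by
  rw [rotCocycle, Matrix.det_mul, det_hypMat, det_rotMat, one_mul]

lemma lyap_eq_iInf (ν : Measure (FS 2)) :
    lyap ν θ = ⨅ n : ℕ, logNormIntegral ν (rotCocycle θ) (n + 1) / (n + 1) := by
  simp only [lyap, opNorm_eq_norm, logNormIntegral, one_div_mul_eq_div]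

lemma tendsto_lyap {ν : Measure (FS 2)} [IsFiniteMeasure ν] (hν : MeasurePreserving shift ν ν) :
    Tendsto (fun n : ℕ ↦ (1 / n : ℝ) *
      ∫ x, Real.log (opNorm (cocycleProd (rotCocycle θ) n x)) ∂ν) atTop (𝓝 (lyap ν θ)) := by
  simpa only [lyap_eq_iInf, logNormIntegral, opNorm_eq_norm, one_div_mul_eq_div] using
    tendsto_logNormIntegral_div hν (continuous_rotCocycle θ) (det_rotCocycle θ)

lemma cocycleProd_rotCocycle_zero (n : ℕ) (x : FS 2) :
    cocycleProd (rotCocycle 0) n x = hypMat ^ n := by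
  induction n generalizing x with
  | zero => rfl
  | succ n ih => rw [cocycleProd, ih, rotCocycle, Pi.zero_apply, rotMat_zero, mul_one, pow_succ]

lemma lyap_zero (ν : Measure (FS 2)) [IsProbabilityMeasure ν] : lyap ν 0 = Real.log λ₊ := by
  have hterm (n : ℕ) : logNormIntegral ν (rotCocycle 0) (n + 1) / (n + 1) = Real.log λ₊ := by
    simp only [logNormIntegral, cocycleProd_rotCocycle_zero, norm_hypMat_pow, integral_const,
      probReal_univ, one_smul, Real.log_pow]
    field_simp
    push_cast
    ring
  simp only [lyap_eq_iInf, hterm, ciInf_const]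

lemma norm_cocycleProd_two_le (x : FS 2) :
    ‖cocycleProd (rotCocycle θ) 2 x‖ ≤ ‖hypMat * rotMat (θ (x 1)) * hypMat‖ := by
  have h : cocycleProd (rotCocycle θ) 2 x
      = hypMat * rotMat (θ (x 1)) * hypMat * rotMat (θ (x 0)) := by
    simp [cocycleProd, rotCocycle, shift, mul_assoc]
  rw [h]
  exact (norm_mul_le _ _).trans
    (mul_le_of_le_one_right (norm_nonneg _) (norm_rotMat_le _))

lemma lyap_le_half_logNormIntegral_two (ν : Measure (FS 2)) :
    lyap ν θ ≤ logNormIntegral ν (rotCocycle θ) 2 / 2 := by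
  rw [lyap_eq_iInf]
  refine (ciInf_le ⟨0, ?_⟩ 1).trans_eq (by norm_num)
  rintro _ ⟨n, rfl⟩
  exact div_nonneg (logNormIntegral_nonneg (det_rotCocycle θ) _) (by positivity)

lemma logNormIntegral_two_lt {ν : Measure (FS 2)} [IsProbabilityMeasure ν]
    [ν.IsOpenPosMeasure] {i : Fin 2} (hi : Real.sin (θ i) ≠ 0) :
    logNormIntegral ν (rotCocycle θ) 2 < 2 * Real.log λ₊ := by
  have hpos := norm_cocycleProd_pos (det_rotCocycle θ) 2
  have hlog : 2 * Real.log λ₊ = Real.log (λ₊ ^ 2) := by rw [Real.log_pow, Nat.cast_ofNat]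
  have hle (x : FS 2) : Real.log ‖cocycleProd (rotCocycle θ) 2 x‖ ≤ 2 * Real.log λ₊ := by
    rw [hlog]
    exact Real.log_le_log (hpos x) ((norm_cocycleProd_two_le θ x).trans
      (norm_hypMat_mul_rotMat_mul_hypMat_le _))
  have hlt : Real.log ‖cocycleProd (rotCocycle θ) 2 (fun _ ↦ i)‖ < 2 * Real.log λ₊ := by
    rw [hlog]
    exact Real.log_lt_log (hpos _) ((norm_cocycleProd_two_le θ _).trans_lt
      (norm_hypMat_mul_rotMat_mul_hypMat_lt hi))
  have hcont := continuous_log_norm_cocycleProd (continuous_rotCocycle θ) (det_rotCocycle θ) 2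
  have hgap : 0 < ∫ x, (2 * Real.log λ₊ - Real.log ‖cocycleProd (rotCocycle θ) 2 x‖) ∂ν :=
    (continuous_const.sub hcont).integral_pos_of_hasCompactSupport_nonneg_nonzero
      (HasCompactSupport.of_compactSpace _) (fun x ↦ sub_nonneg.2 (hle x)) (sub_pos.2 hlt).ne'
  rw [integral_sub (integrable_const _) (hcont.integrable_of_hasCompactSupport
    (HasCompactSupport.of_compactSpace _)), integral_const, probReal_univ, one_smul] at hgap
  exact sub_pos.1 hgap

lemma lyap_lt_lyap_zero {ν : Measure (FS 2)} [IsProbabilityMeasure ν] [ν.IsOpenPosMeasure]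
    {i : Fin 2} (hi : Real.sin (θ i) ≠ 0) : lyap ν θ < lyap ν 0 := by
  rw [lyap_zero]
  linarith [lyap_le_half_logNormIntegral_two θ ν, logNormIntegral_two_lt θ hi (ν := ν)]

end RotatedCocycle

/-- For the rotated hyperbolic cocycle over the full `2`-shift and a
fully supported `σ`-invariant ergodic measure `ν`: the defining limit exists and equals
the infimum, `λ_+(A_{(0,0)}, ν) = log((3+√5)/2)`, and there is `ε₀ > 0` such that
`λ_+(A_θ, ν) < λ_+(A_{(0,0)}, ν)` for every `θ ∈ [−ε,ε]² ∖ {(0,0)}` with `0 < ε ≤ ε₀`. -/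
theorem rotated_cocycle_lyapunov (ν : Measure (FS 2)) [IsProbabilityMeasure ν]
    (herg : Ergodic (shift (q := 2)) ν)
    (hsupp : ∀ U : Set (FS 2), IsOpen U → U.Nonempty → 0 < ν U) :
    (∀ θ : Fin 2 → ℝ,
      Filter.Tendsto (fun n : ℕ => (1 / n : ℝ) *
          ∫ x, Real.log (opNorm (cocycleProd (rotCocycle θ) n x)) ∂ν)
        Filter.atTop (𝓝 (lyap ν θ))) ∧
    lyap ν 0 = Real.log ((3 + Real.sqrt 5) / 2) ∧
    ∃ ε₀ > (0 : ℝ), ∀ ε : ℝ, 0 < ε → ε ≤ ε₀ → ∀ θ : Fin 2 → ℝ,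
      (∀ i, |θ i| ≤ ε) → θ ≠ 0 → lyap ν θ < lyap ν 0 := by
  have : ν.IsOpenPosMeasure := ⟨fun U hU hne ↦ (hsupp U hU hne).ne'⟩
  refine ⟨fun θ ↦ tendsto_lyap θ herg.toMeasurePreserving, lyap_zero ν, 1, one_pos, ?_⟩
  intro ε _ hε θ hθ hθ0
  obtain ⟨i, hi⟩ : ∃ i, θ i ≠ 0 := Function.ne_iff.1 hθ0
  have hθi := abs_le.1 ((hθ i).trans hε)
  have hsin : Real.sin (θ i) ≠ 0 := fun h ↦ hi <| (Real.sin_eq_zero_iff_of_lt_of_lt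
    (by linarith [Real.pi_gt_three]) (by linarith [Real.pi_gt_three])).1 h
  exact lyap_lt_lyap_zero θ hsin

end PaperBGI
end
end

section
/- Let J_1 and J_2 be two normalized Lipschitz continuous Jacobians on a transitive subshift of finite type Ω, and let μ_1 be the Gibbs (invariant) measure of log J_1, i.e. the unique σ-invariant Borel probability measure satisfying ∫ ∑_{z : σ(z)=x} J_1(z) g(z) dμ_1(x) = ∫ g dμ_1 for every continuous g. If J_1 ≠ J_2, then the relative entropy (Kullback–Leibler divergence) of μ_1 with respect to the Gibbs measure of log J_2 is strictly positive: ∫_Ω log( J_1(x) / J_2(x) ) dμ_1(x) > 0. -/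
open MeasureTheory Filter Topology

attribute [local instance] Classical.propDecidable

noncomputable section

namespace PaperBGI

/-- The Ruelle transfer operator `L_{log J}` of a Jacobian `J` on the subshift `Ω`. -/
def transferOp {q : ℕ} (Ω : Set (FS q)) (J : FS q → ℝ) (g : FS q → ℝ) (x : FS q) : ℝ :=
  ∑ i : Fin q, if cons i x ∈ Ω then J (cons i x) * g (cons i x) else 0

/-!
Normalization of `J₂` gives `L_{log J₁}(J₂/J₁) = 1` on `Ω`, so `∫ J₂/J₁ dμ₁ = 1` and the relative
entropy equals `∫ (t - 1 - log t) dμ₁` with `t = J₂/J₁`. This integrand is continuous, nonnegative,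
and positive at a point `x₀ ∈ Ω` where `J₁ x₀ ≠ J₂ x₀`, so it suffices that `μ₁` charges every
cylinder around a point of `Ω`. Testing the fixed-point identity against the indicator of a clopen
set `S` gives `μ₁ S ≥ (min J₁) · μ₁ {x | cons i x ∈ S ∩ Ω}`; this lets mass pass from a
cylinder `[w]` to `[i w]`, and by irreducibility from one symbol to every other.
-/

section Cylinders

variable {q : ℕ}

theorem cyl_eq_cylinder (x : FS q) (n : ℕ) : cyl x n = PiNat.cylinder x n := rfl

theorem isClopen_cyl (x : FS q) (n : ℕ) : IsClopen (cyl x n) := by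
  rw [cyl_eq_cylinder, PiNat.cylinder_eq_pi]
  exact ⟨isClosed_set_pi fun _ _ => isClosed_discrete _,
    isOpen_set_pi (Finset.range n).finite_toSet fun _ _ => isOpen_discrete _⟩

theorem mem_cyl_self (x : FS q) (n : ℕ) : x ∈ cyl x n := fun _ _ => rfl

theorem cyl_mem_nhds (x : FS q) (n : ℕ) : cyl x n ∈ 𝓝 x :=
  (isClopen_cyl x n).isOpen.mem_nhds (mem_cyl_self x n)

theorem exists_cyl_subset_of_mem_nhds {U : Set (FS q)} {x : FS q} (hU : U ∈ 𝓝 x) :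
    ∃ n, cyl x n ⊆ U := by
  obtain ⟨_, ⟨y, n, rfl⟩, hx, hsub⟩ := (PiNat.isTopologicalBasis_cylinders _).mem_nhds_iff.1 hU
  exact ⟨n, (PiNat.mem_cylinder_iff_eq.1 hx).le.trans hsub⟩

theorem sdist_nonneg (x z : FS q) : 0 ≤ sdist x z := by
  unfold sdist
  split_ifs <;> positivity

theorem sdist_le_of_mem_cyl {x z : FS q} {n : ℕ} (h : z ∈ cyl x n) :
    sdist x z ≤ (1 / 2) ^ n := by
  unfold sdist
  split_ifs with hne
  · exact pow_le_pow_of_le_one (by norm_num) (by norm_num)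
      (not_lt.1 fun hlt => Nat.find_spec hne (h _ hlt).symm)
  · positivity

theorem LipSh.continuous {f : FS q → ℝ} (hf : LipSh f) : Continuous f := by
  obtain ⟨L, hL, hlip⟩ := hf
  refine continuous_iff_continuousAt.2 fun x => Metric.tendsto_nhds.2 fun ε hε => ?_
  obtain ⟨n, hn⟩ := exists_pow_lt_of_lt_one (div_pos hε (by linarith : 0 < L + 1)) one_half_lt_one
  filter_upwards [cyl_mem_nhds x n] with z hz
  rw [Real.dist_eq, abs_sub_comm]
  calc |f x - f z| ≤ L * sdist x z := hlip x z
    _ ≤ (L + 1) * (1 / 2) ^ n :=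
        mul_le_mul (by linarith) (sdist_le_of_mem_cyl hz) (sdist_nonneg x z) (by linarith)
    _ < ε := (lt_div_iff₀' (by linarith)).1 hn

theorem continuous_cons (i : Fin q) : Continuous (cons i : FS q → FS q) := by
  refine continuous_pi fun n => ?_
  cases n
  · exact continuous_const
  · exact continuous_apply _

end Cylinders

section SubshiftOfFiniteType

variable {q : ℕ} {M : Fin q → Fin q → Bool}

theorem isClosed_sftSet (M : Fin q → Fin q → Bool) : IsClosed (sftSet M) := by
  have : sftSet M = ⋂ n, (fun x : FS q => (x n, x (n + 1))) ⁻¹' {p | M p.1 p.2 = true} := by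
    ext x
    simp [sftSet]
  rw [this]
  exact isClosed_iInter fun n => (isClosed_discrete _).preimage (by fun_prop)

theorem shift_mem_sftSet {x : FS q} (hx : x ∈ sftSet M) : shift x ∈ sftSet M :=
  fun n => hx (n + 1)

theorem cons_mem_sftSet_iff {i : Fin q} {x : FS q} :
    cons i x ∈ sftSet M ↔ M i (x 0) = true ∧ x ∈ sftSet M :=
  ⟨fun h => ⟨h 0, fun n => h (n + 1)⟩, fun ⟨hi, hx⟩ n => by cases n; exacts [hi, hx _]⟩

end SubshiftOfFiniteType

section TransferOperator

variable {q : ℕ} {Ω : Set (FS q)} {J : FS q → ℝ} {g : FS q → ℝ}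

theorem Normalized.continuous (hJ : Normalized Ω J) (hlip : LipSh fun x => Real.log (J x)) :
    Continuous J := by
  simpa only [Real.exp_log (hJ.1 _)] using hlip.continuous.rexp

theorem Normalized.exists_pos_le (hJ : Normalized Ω J) (hJc : Continuous J) :
    ∃ δ, 0 < δ ∧ ∀ x, δ ≤ J x := by
  obtain ⟨δ, hδ, hle⟩ :=
    isCompact_univ.exists_forall_le' hJc.continuousOn fun x _ => hJ.1 x
  exact ⟨δ, hδ, fun x => hle x trivial⟩

theorem transferOp_div_eq_one {J₁ J₂ : FS q → ℝ} (h₁ : Normalized Ω J₁) (h₂ : Normalized Ω J₂)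
    {x : FS q} (hx : x ∈ Ω) : transferOp Ω J₁ (fun z => J₂ z / J₁ z) x = 1 := by
  rw [← h₂.2 x hx]
  refine Finset.sum_congr rfl fun i _ => ?_
  rw [mul_div_cancel₀ _ (h₁.1 _).ne']

theorem transferOp_nonneg (hJ : ∀ x, 0 ≤ J x) (hg : ∀ x, 0 ≤ g x) (x : FS q) :
    0 ≤ transferOp Ω J g x :=
  Finset.sum_nonneg fun i _ => by
    split_ifs
    exacts [mul_nonneg (hJ _) (hg _), le_rfl]

theorem mul_le_transferOp (hJ : ∀ x, 0 ≤ J x) (hg : ∀ x, 0 ≤ g x) {i : Fin q} {x : FS q}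
    (hi : cons i x ∈ Ω) : J (cons i x) * g (cons i x) ≤ transferOp Ω J g x := by
  have := Finset.single_le_sum (s := Finset.univ)
    (f := fun j => if cons j x ∈ Ω then J (cons j x) * g (cons j x) else 0)
    (fun j _ => by split_ifs; exacts [mul_nonneg (hJ _) (hg _), le_rfl]) (Finset.mem_univ i)
  simpa only [transferOp, hi, if_true] using this

theorem integrable_transferOp {μ : Measure (FS q)} [IsFiniteMeasure μ] (hΩ : MeasurableSet Ω)
    (hJ : Continuous J) (hg : Continuous g) : Integrable (transferOp Ω J g) μ := by
  have hsum : transferOp Ω J g =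
      fun x => ∑ i, (cons i ⁻¹' Ω).indicator (fun y => J (cons i y) * g (cons i y)) x := by
    ext x
    simp only [transferOp, Set.indicator_apply, Set.mem_preimage]
  rw [hsum]
  refine integrable_finsetSum _ fun i _ => Integrable.indicator ?_
    (hΩ.preimage (continuous_cons i).measurable)
  exact ((hJ.comp (continuous_cons i)).mul
    (hg.comp (continuous_cons i))).integrable_of_hasCompactSupport (.of_compactSpace _)

end TransferOperator

section FullSupport

variable {q : ℕ}

def IsFixedByDualTransfer (Ω : Set (FS q)) (J : FS q → ℝ) (μ : Measure (FS q)) : Prop :=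
  ∀ g : FS q → ℝ, Continuous g → ∫ x, transferOp Ω J g x ∂μ = ∫ x, g x ∂μ

variable {Ω : Set (FS q)} {J : FS q → ℝ} {μ : Measure (FS q)} {δ : ℝ}

theorem IsFixedByDualTransfer.mul_measureReal_preimage_cons_le [IsFiniteMeasure μ]
    (hμ : IsFixedByDualTransfer Ω J μ) (hΩ : MeasurableSet Ω) (hJ : Continuous J)
    (hδ : 0 ≤ δ) (hJδ : ∀ x, δ ≤ J x) {S : Set (FS q)} (hS : IsClopen S) (i : Fin q) :
    δ * μ.real (cons i ⁻¹' (S ∩ Ω)) ≤ μ.real S := by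
  have hJ0 : ∀ x, 0 ≤ J x := fun x => hδ.trans (hJδ x)
  have hT : MeasurableSet (cons i ⁻¹' (S ∩ Ω)) :=
    (hS.isClosed.measurableSet.inter hΩ).preimage (continuous_cons i).measurable
  have hg : Continuous (S.indicator (1 : FS q → ℝ)) := hS.continuous_indicator continuous_const
  have hg0 : ∀ x, 0 ≤ S.indicator (1 : FS q → ℝ) x :=
    Set.indicator_nonneg fun _ _ => zero_le_one
  calc δ * μ.real (cons i ⁻¹' (S ∩ Ω))
      = ∫ x, (cons i ⁻¹' (S ∩ Ω)).indicator (fun _ => δ) x ∂μ := by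
        rw [integral_indicator_const _ hT, smul_eq_mul, mul_comm]
    _ ≤ ∫ x, transferOp Ω J (S.indicator 1) x ∂μ := by
        refine integral_mono ((integrable_const δ).indicator hT)
          (integrable_transferOp hΩ hJ hg) fun x => ?_
        by_cases hx : x ∈ cons i ⁻¹' (S ∩ Ω)
        · rw [Set.indicator_of_mem hx]
          calc δ = δ * S.indicator 1 (cons i x) := by
                rw [Set.indicator_of_mem hx.1, Pi.one_apply, mul_one]
            _ ≤ J (cons i x) * S.indicator 1 (cons i x) :=
                mul_le_mul_of_nonneg_right (hJδ _) (hg0 _)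
            _ ≤ _ := mul_le_transferOp hJ0 hg0 hx.2
        · rw [Set.indicator_of_notMem hx]
          exact transferOp_nonneg hJ0 hg0 x
    _ = μ.real S := by rw [hμ _ hg, integral_indicator_one hS.isClosed.measurableSet]

variable {M : Fin q → Fin q → Bool} [IsProbabilityMeasure μ]

theorem IsFixedByDualTransfer.mul_measureReal_le_of_cons_mem
    (hμ : IsFixedByDualTransfer (sftSet M) J μ) (hsupp : μ (sftSet M) = 1) (hJ : Continuous J)
    (hδ : 0 ≤ δ) (hJδ : ∀ x, δ ≤ J x) {S T : Set (FS q)} (hS : IsClopen S) (i : Fin q)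
    (hT : ∀ x ∈ T, M i (x 0) = true ∧ cons i x ∈ S) : δ * μ.real T ≤ μ.real S := by
  have hΩ := (isClosed_sftSet M).measurableSet
  have hsub : T ∩ sftSet M ⊆ cons i ⁻¹' (S ∩ sftSet M) := fun x ⟨hxT, hx⟩ =>
    ⟨(hT x hxT).2, cons_mem_sftSet_iff.2 ⟨(hT x hxT).1, hx⟩⟩
  calc δ * μ.real T = δ * μ.real (T ∩ sftSet M) := by
        rw [measureReal_def, measureReal_def,
          measure_inter_conull ((prob_compl_eq_zero_iff hΩ).2 hsupp)]
    _ ≤ δ * μ.real (cons i ⁻¹' (S ∩ sftSet M)) :=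
        mul_le_mul_of_nonneg_left (measureReal_mono hsub) hδ
    _ ≤ μ.real S := hμ.mul_measureReal_preimage_cons_le hΩ hJ hδ hJδ hS i

theorem isClopen_setOf_apply_zero_eq (a : Fin q) : IsClopen {x : FS q | x 0 = a} :=
  (isClopen_discrete {a}).preimage (continuous_apply 0)

theorem IsFixedByDualTransfer.measureReal_setOf_apply_zero_pos
    (hμ : IsFixedByDualTransfer (sftSet M) J μ) (hsupp : μ (sftSet M) = 1) (hJ : Continuous J)
    (hδ : 0 < δ) (hJδ : ∀ x, δ ≤ J x) (hirr : IsIrreducible M) (a : Fin q) :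
    0 < μ.real {x : FS q | x 0 = a} := by
  obtain ⟨c, hc⟩ : ∃ c, 0 < μ {x : FS q | x 0 = c} := by
    refine exists_measure_pos_of_not_measure_iUnion_null ?_
    rw [Set.iUnion_eq_univ_iff.2 fun x => ⟨x 0, rfl⟩, measure_univ]
    exact one_ne_zero
  obtain ⟨n, -, p, rfl, rfl, hp⟩ := hirr a c
  -- Mass propagates backwards along the path `p` from `p n` to `p 0`.
  refine Nat.decreasingInduction (motive := fun k _ => 0 < μ.real {x : FS q | x 0 = p k})
    (fun k hk ih => ?_) (ENNReal.toReal_pos hc.ne' (measure_ne_top _ _)) (Nat.zero_le n)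
  refine (mul_pos hδ ih).trans_le (hμ.mul_measureReal_le_of_cons_mem hsupp hJ hδ.le hJδ
    (isClopen_setOf_apply_zero_eq _) _ fun x hx => ⟨?_, rfl⟩)
  rw [show x 0 = p (k + 1) from hx]
  exact hp k hk

theorem IsFixedByDualTransfer.measureReal_cyl_pos
    (hμ : IsFixedByDualTransfer (sftSet M) J μ) (hsupp : μ (sftSet M) = 1) (hJ : Continuous J)
    (hδ : 0 < δ) (hJδ : ∀ x, δ ≤ J x) (hirr : IsIrreducible M) {y : FS q} (hy : y ∈ sftSet M)
    (n : ℕ) : 0 < μ.real (cyl y (n + 1)) := by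
  induction n generalizing y with
  | zero =>
    convert hμ.measureReal_setOf_apply_zero_pos hsupp hJ hδ hJδ hirr (y 0) using 3
    simp [cyl]
  | succ n ih =>
    refine (mul_pos hδ (ih (shift_mem_sftSet hy))).trans_le
      (hμ.mul_measureReal_le_of_cons_mem hsupp hJ hδ.le hJδ (isClopen_cyl y _) (y 0)
        fun x hx => ⟨?_, ?_⟩)
    · rw [hx 0 n.succ_pos]
      exact hy 0
    · rintro (_ | j) hj
      · rfl
      · exact hx j (by omega)

end FullSupport

section RelativeEntropy

variable {q : ℕ} {Ω : Set (FS q)} {J₁ J₂ : FS q → ℝ} {μ : Measure (FS q)}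
  [IsProbabilityMeasure μ]

theorem IsFixedByDualTransfer.integral_div_eq_one (hμ : IsFixedByDualTransfer Ω J₁ μ)
    (hΩ : MeasurableSet Ω) (hsupp : μ Ω = 1) (h₁ : Normalized Ω J₁) (h₂ : Normalized Ω J₂)
    (hr : Continuous fun x => J₂ x / J₁ x) : ∫ x, J₂ x / J₁ x ∂μ = 1 := by
  rw [← hμ _ hr, integral_congr_ae (g := fun _ => (1 : ℝ)), integral_const, probReal_univ,
    one_smul]
  filter_upwards [(mem_ae_iff_prob_eq_one hΩ).2 hsupp] with x hx
  exact transferOp_div_eq_one h₁ h₂ hx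

theorem IsFixedByDualTransfer.integral_log_div_eq (hμ : IsFixedByDualTransfer Ω J₁ μ)
    (hΩ : MeasurableSet Ω) (hsupp : μ Ω = 1) (h₁ : Normalized Ω J₁) (h₂ : Normalized Ω J₂)
    (hJ₁ : Continuous J₁) (hJ₂ : Continuous J₂) :
    ∫ x, Real.log (J₁ x / J₂ x) ∂μ =
      ∫ x, (J₂ x / J₁ x - 1 - Real.log (J₂ x / J₁ x)) ∂μ := by
  have hr : Continuous fun x => J₂ x / J₁ x := hJ₂.div hJ₁ fun x => (h₁.1 x).ne'
  have hint {f : FS q → ℝ} (hf : Continuous f) : Integrable f μ :=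
    hf.integrable_of_hasCompactSupport (.of_compactSpace _)
  have hr₁ : Continuous fun x => J₂ x / J₁ x - 1 := hr.sub continuous_const
  have hlog : Continuous fun x => Real.log (J₂ x / J₁ x) :=
    hr.log fun x => (div_pos (h₂.1 x) (h₁.1 x)).ne'
  rw [integral_sub (hint hr₁) (hint hlog),
    integral_sub (hint hr) (integrable_const 1), hμ.integral_div_eq_one hΩ hsupp h₁ h₂ hr,
    integral_const, probReal_univ, one_smul, sub_self, zero_sub, ← integral_neg]
  simp only [← Real.log_inv, inv_div]

theorem integral_pos_of_measureReal_cyl_pos {f : FS q → ℝ} (hf : Continuous f) (hf0 : 0 ≤ f)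
    {x₀ : FS q} (hx₀ : 0 < f x₀) (hcyl : ∀ n, 0 < μ.real (cyl x₀ (n + 1))) :
    0 < ∫ x, f x ∂μ := by
  rw [integral_pos_iff_support_of_nonneg hf0
    (hf.integrable_of_hasCompactSupport (.of_compactSpace _))]
  obtain ⟨n, hn⟩ := exists_cyl_subset_of_mem_nhds ((isOpen_lt continuous_const hf).mem_nhds hx₀)
  refine (ENNReal.toReal_pos_iff.1 (hcyl n)).1.trans_le (measure_mono fun z hz => ?_)
  exact (hn (PiNat.cylinder_anti x₀ n.le_succ hz)).ne'

end RelativeEntropy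

theorem relative_entropy_positive_general {q : ℕ}
    (M : Fin q → Fin q → Bool) (hirr : IsIrreducible M)
    (J₁ J₂ : FS q → ℝ)
    (hlip₁ : LipSh fun x => Real.log (J₁ x)) (hlip₂ : LipSh fun x => Real.log (J₂ x))
    (hnorm₁ : Normalized (sftSet M) J₁) (hnorm₂ : Normalized (sftSet M) J₂)
    (μ₁ : Measure (FS q)) [IsProbabilityMeasure μ₁]
    (hsupp : μ₁ (sftSet M) = 1)
    (hfix : ∀ g : FS q → ℝ, Continuous g →
      ∫ x, transferOp (sftSet M) J₁ g x ∂μ₁ = ∫ x, g x ∂μ₁)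
    (hne : ∃ x ∈ sftSet M, J₁ x ≠ J₂ x) :
    0 < ∫ x, Real.log (J₁ x / J₂ x) ∂μ₁ := by
  obtain ⟨x₀, hx₀, hne⟩ := hne
  have hfix : IsFixedByDualTransfer (sftSet M) J₁ μ₁ := hfix
  have hJ₁ := hnorm₁.continuous hlip₁
  have hJ₂ := hnorm₂.continuous hlip₂
  have hr : Continuous fun x => J₂ x / J₁ x := hJ₂.div hJ₁ fun x => (hnorm₁.1 x).ne'
  have hr_pos x : 0 < J₂ x / J₁ x := div_pos (hnorm₂.1 x) (hnorm₁.1 x)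
  have hr_ne : J₂ x₀ / J₁ x₀ ≠ 1 := by
    rwa [Ne, div_eq_one_iff_eq (hnorm₁.1 x₀).ne', eq_comm]
  obtain ⟨δ, hδ, hJδ⟩ := hnorm₁.exists_pos_le hJ₁
  rw [hfix.integral_log_div_eq (isClosed_sftSet M).measurableSet hsupp hnorm₁ hnorm₂ hJ₁ hJ₂]
  exact integral_pos_of_measureReal_cyl_pos
    ((hr.sub continuous_const).sub (hr.log fun x => (hr_pos x).ne'))
    (fun x => sub_nonneg.2 (Real.log_le_sub_one_of_pos (hr_pos x)))
    (sub_pos.2 (Real.log_lt_sub_one_of_pos (hr_pos x₀) hr_ne))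
    (hfix.measureReal_cyl_pos hsupp hJ₁ hδ hJδ hirr hx₀)

/-- If `J₁, J₂` are normalized Lipschitz Jacobians on a transitive SFT
`Ω` and `μ₁` is the (unique, invariant) Gibbs measure of `log J₁`, i.e. the fixed point of
the dual transfer operator, then `J₁ ≠ J₂` implies that the relative entropy
`∫ log (J₁/J₂) dμ₁` is strictly positive. -/
theorem relative_entropy_positive {q : ℕ}
    (M : Fin q → Fin q → Bool) (hirr : IsIrreducible M)
    (J₁ J₂ : FS q → ℝ)
    (hlip₁ : LipSh fun x => Real.log (J₁ x)) (hlip₂ : LipSh fun x => Real.log (J₂ x))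
    (hnorm₁ : Normalized (sftSet M) J₁) (hnorm₂ : Normalized (sftSet M) J₂)
    (μ₁ : Measure (FS q)) [IsProbabilityMeasure μ₁]
    (hinv : μ₁.map shift = μ₁) (hsupp : μ₁ (sftSet M) = 1)
    (hfix : ∀ g : FS q → ℝ, Continuous g →
      ∫ x, transferOp (sftSet M) J₁ g x ∂μ₁ = ∫ x, g x ∂μ₁)
    (huniq : ∀ ν : Measure (FS q), IsProbabilityMeasure ν → ν.map shift = ν →
      ν (sftSet M) = 1 →
      (∀ g : FS q → ℝ, Continuous g →
        ∫ x, transferOp (sftSet M) J₁ g x ∂ν = ∫ x, g x ∂ν) → ν = μ₁)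
    (hne : ∃ x ∈ sftSet M, J₁ x ≠ J₂ x) :
    0 < ∫ x, Real.log (J₁ x / J₂ x) ∂μ₁ :=
  relative_entropy_positive_general M hirr J₁ J₂ hlip₁ hlip₂ hnorm₁ hnorm₂ μ₁ hsupp hfix hne

end PaperBGI
end
end
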